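/- arXiv:0809.0576 — 2 statements merged into one kernel-verified Lean document; each statement's English description precedes it below -/
import Mathlib

section
/- Let U and W be finite-dimensional complex vector spaces with dim W = r and dim U = s where s < r, and let b: W* → U be a linear map. Then the linear map A: Hom(U, W) → Sym²(W) (identifying Sym²(W) with symmetric maps W* → W) defined by A(e) = e ∘ b + b ∘ e*, where e*: W* → U* is the dual map composed with an identification, is not surjective. -/
/-- Let dim W = r, dim U = s with s < r, and b : W* → U linear.  Then the map
e ↦ (φ, ψ) ↦ φ(e(b ψ)) + ψ(e(b φ)) from Hom(U, W) to symmetric bilinear forms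
on W* (i.e. symmetric maps W* → W identified with Sym²W) is not surjective. -/
theorem sym_square_map_not_surjective (r s : ℕ) (hs : s < r)
    (W U : Type*) [AddCommGroup W] [Module ℂ W] [AddCommGroup U] [Module ℂ U]
    [FiniteDimensional ℂ W] [FiniteDimensional ℂ U]
    (hW : Module.finrank ℂ W = r) (hU : Module.finrank ℂ U = s)
    (b : Module.Dual ℂ W →ₗ[ℂ] U) :
    ¬ (∀ S : Module.Dual ℂ W →ₗ[ℂ] Module.Dual ℂ W →ₗ[ℂ] ℂ,
        (∀ φ ψ : Module.Dual ℂ W, S φ ψ = S ψ φ) →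
        ∃ e : U →ₗ[ℂ] W, ∀ φ ψ : Module.Dual ℂ W,
          S φ ψ = φ (e (b ψ)) + ψ (e (b φ))) := by
  intro h
  -- b is not injective since finrank (Dual W) = r > s = finrank U
  have hnotinj : ¬ Function.Injective b := by
    intro hinj
    have := LinearMap.finrank_le_finrank_of_injective hinj
    rw [Subspace.dual_finrank_eq] at this
    omega
  obtain ⟨φ₀, hφ₀b, hφ₀⟩ : ∃ φ₀ : Module.Dual ℂ W, b φ₀ = 0 ∧ φ₀ ≠ 0 := by
    rw [injective_iff_map_eq_zero] at hnotinj
    push_neg at hnotinj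
    exact hnotinj
  obtain ⟨w, hw⟩ : ∃ w : W, φ₀ w ≠ 0 := by
    by_contra hc
    push_neg at hc
    exact hφ₀ (LinearMap.ext fun x => by simp [hc x])
  set S : Module.Dual ℂ W →ₗ[ℂ] Module.Dual ℂ W →ₗ[ℂ] ℂ :=
    LinearMap.mk₂ ℂ (fun φ ψ => φ w * ψ w)
      (fun φ φ' ψ => by simp [add_mul])
      (fun c φ ψ => by simp [mul_assoc])
      (fun φ ψ ψ' => by simp [mul_add])
      (fun c φ ψ => by ring_nf; simp [mul_comm, mul_assoc, mul_left_comm])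
  obtain ⟨e, he⟩ := h S (fun φ ψ => by simp [S, mul_comm])
  have := he φ₀ φ₀
  simp [S, hφ₀b] at this
  exact hw this
end

section
/- Let V be a vector space with an isomorphism f: V → V* decomposed as f = f_s + f_a into symmetric and antisymmetric parts, and assume V = V_s ⊕ V_a with V_a = ker(f_s), V_s = ker(f_a). Suppose β ∈ S²V and γ ∈ S²V* satisfy γ = f β f (i.e. f intertwines β and γ). Then the mixed component γ_{sa} ∈ V_s* ⊗ V_a* of γ vanishes: γ_{sa} = f_s β_{sa} f_a together with symmetry of γ and (anti)symmetry of f_s, f_a forces γ_{sa} = -γ_{sa} = 0. -/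
/-- Let f : V → V* be an isomorphism with symmetric/antisymmetric parts
f = f_s + f_a, V_a = ker f_s, V_s = ker f_a, V = V_s ⊕ V_a.  If β ∈ S²V and
γ ∈ S²V* are symmetric with γ = f β f, then the mixed component of γ vanishes:
γ(u)(v) = 0 for u ∈ V_s and v ∈ V_a. -/
theorem mixed_component_vanishes (V : Type*) [AddCommGroup V] [Module ℂ V]
    [FiniteDimensional ℂ V]
    (f fs fa : V →ₗ[ℂ] Module.Dual ℂ V)
    (hf : f = fs + fa) (hbij : Function.Bijective f)
    (hfs : ∀ u v : V, fs u v = fs v u)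
    (hfa : ∀ u v : V, fa u v = -fa v u)
    (Vs Va : Submodule ℂ V)
    (hVa : Va = LinearMap.ker fs) (hVs : Vs = LinearMap.ker fa)
    (hcompl : IsCompl Vs Va)
    (β : Module.Dual ℂ V →ₗ[ℂ] V) (hβ : ∀ φ ψ : Module.Dual ℂ V, φ (β ψ) = ψ (β φ))
    (γ : V →ₗ[ℂ] Module.Dual ℂ V) (hγsym : ∀ u v : V, γ u v = γ v u)
    (hγ : γ = f ∘ₗ β ∘ₗ f) :
    ∀ u ∈ Vs, ∀ v ∈ Va, γ u v = 0 := by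
  intro u hu v hv
  rw [hVs] at hu
  rw [hVa] at hv
  have hau : fa u = 0 := hu
  have hsv : fs v = 0 := hv
  have happ : ∀ w z : V, f w z = fs w z + fa w z := by
    intro w z; rw [hf]; rfl
  have h1 : γ u v = - (f v) (β (f u)) := by
    rw [hγ]
    simp only [LinearMap.comp_apply]
    rw [happ]
    rw [hfs (β (f u)) v, hsv, hfa (β (f u)) v]
    rw [happ v (β (f u)), hsv]
    simp
  have h2 : γ v u = (f u) (β (f v)) := by
    rw [hγ]
    simp only [LinearMap.comp_apply]
    rw [happ, happ u (β (f v))]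
    rw [hfs (β (f v)) u, hfa (β (f v)) u, hau]
    simp
  linear_combination (h1 + h2 - hβ (f v) (f u) + hγsym u v) / 2
end
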